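/- arXiv:1305.4739 — 3 statements merged into one kernel-verified Lean document; each statement's English description precedes it below -/
import Mathlib

section
/- 𝔟 ≤ 𝔯: the unbounding number is at most the reaping number. -/
/-! Given an unsplittable family `R` of infinite sets, the functions `nextAbove B` (`B ∈ R`) form
an unbounded family of size at most `#R`. Indeed, if `g` eventually dominates every `nextAbove B`,
iterate `g` to get block ends `a 0 < a 1 < ⋯` with `g (a j) ≤ a (j + 1)`: then every `B ∈ R` meets
almost every block `(a j, a (j + 1)]`, so the union of the even blocks splits all of `R`. -/

open Cardinal Set Filter

/-- `f <* g`: `f n < g n` for all but finitely many `n`. -/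
def DomLT (f g : ℕ → ℕ) : Prop := ∀ᶠ n in Filter.atTop, f n < g n

/-- The unbounding number `𝔟`: the least cardinality of a family `F ⊆ ω^ω` such that
for every `g ∈ ω^ω` some `f ∈ F` satisfies `¬(f <* g)`. -/
noncomputable def bNumber : Cardinal :=
  sInf { c | ∃ F : Set (ℕ → ℕ), (∀ g : ℕ → ℕ, ∃ f ∈ F, ¬ DomLT f g) ∧ #F = c }

/-- `A` splits `B`: both `A ∩ B` and `B \ A` are infinite. -/
def Splits (A B : Set ℕ) : Prop := (A ∩ B).Infinite ∧ (B \ A).Infinite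

/-- The reaping number `𝔯`: the least cardinality of a family `R` of infinite subsets of
`ℕ` such that no single infinite `A ⊆ ℕ` splits every member of `R`. -/
noncomputable def rNumber : Cardinal :=
  sInf { c | ∃ R : Set (Set ℕ), (∀ B ∈ R, B.Infinite) ∧
    (¬ ∃ A : Set ℕ, A.Infinite ∧ ∀ B ∈ R, Splits A B) ∧ #R = c }

noncomputable def nextAbove (B : Set ℕ) (n : ℕ) : ℕ := sInf {m | m ∈ B ∧ n < m}

section nextAbove

variable {B : Set ℕ}

lemma nextAbove_spec (hB : B.Infinite) (n : ℕ) : nextAbove B n ∈ B ∧ n < nextAbove B n :=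
  Nat.sInf_mem (hB.exists_gt n)

lemma eventually_inter_Ioc_nonempty_of_domLT {g a : ℕ → ℕ} (hB : B.Infinite)
    (hg : DomLT (nextAbove B) g) (ha : Tendsto a atTop atTop) (hga : ∀ j, g (a j) ≤ a (j + 1)) :
    ∀ᶠ j in atTop, (B ∩ Ioc (a j) (a (j + 1))).Nonempty := by
  filter_upwards [ha.eventually hg] with j hj
  obtain ⟨hmem, hlt⟩ := nextAbove_spec hB (a j)
  exact ⟨nextAbove B (a j), hmem, hlt, (hj.trans_le (hga j)).le⟩

end nextAbove

def blockSeq (g : ℕ → ℕ) : ℕ → ℕ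
  | 0 => 0
  | k + 1 => max (g (blockSeq g k)) (blockSeq g k + 1)

lemma strictMono_blockSeq (g : ℕ → ℕ) : StrictMono (blockSeq g) :=
  strictMono_nat_of_lt_succ fun _ => lt_max_of_lt_right (Nat.lt_succ_self _)

lemma le_blockSeq_succ (g : ℕ → ℕ) (k : ℕ) : g (blockSeq g k) ≤ blockSeq g (k + 1) :=
  le_max_left _ _

def evenBlocks (a : ℕ → ℕ) : Set ℕ := {m | ∃ k, m ∈ Ioc (a (2 * k)) (a (2 * k + 1))}

section blocks

variable {a : ℕ → ℕ} (ha : StrictMono a)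
include ha

lemma StrictMono.eq_of_mem_Ioc {i j m : ℕ} (hi : m ∈ Ioc (a i) (a (i + 1)))
    (hj : m ∈ Ioc (a j) (a (j + 1))) : i = j := by
  have hij : i < j + 1 := ha.lt_iff_lt.mp (hi.1.trans_le hj.2)
  have hji : j < i + 1 := ha.lt_iff_lt.mp (hj.1.trans_le hi.2)
  omega

lemma mem_evenBlocks_iff {j m : ℕ} (hm : m ∈ Ioc (a j) (a (j + 1))) :
    m ∈ evenBlocks a ↔ Even j := by
  constructor
  · rintro ⟨k, hk⟩
    exact ha.eq_of_mem_Ioc hk hm ▸ even_two_mul k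
  · rintro ⟨k, rfl⟩
    exact ⟨k, by rwa [two_mul]⟩

lemma infinite_of_frequently_inter_Ioc_nonempty {S : Set ℕ}
    (hS : ∃ᶠ j in atTop, (S ∩ Ioc (a j) (a (j + 1))).Nonempty) : S.Infinite := by
  refine infinite_of_forall_exists_gt fun N => ?_
  obtain ⟨j, hNj, m, hmS, hm⟩ := frequently_atTop.mp hS N
  exact ⟨m, hmS, (hNj.trans ha.le_apply).trans_lt hm.1⟩

lemma evenBlocks_infinite : (evenBlocks a).Infinite := by
  refine infinite_of_frequently_inter_Ioc_nonempty ha (frequently_atTop.mpr fun N => ?_)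
  refine ⟨2 * N, by omega, a (2 * N + 1), ?_, ha (Nat.lt_succ_self _), le_rfl⟩
  exact (mem_evenBlocks_iff ha ⟨ha (Nat.lt_succ_self _), le_rfl⟩).mpr (even_two_mul N)

lemma evenBlocks_splits {B : Set ℕ}
    (hB : ∀ᶠ j in atTop, (B ∩ Ioc (a j) (a (j + 1))).Nonempty) : Splits (evenBlocks a) B := by
  obtain ⟨J, hJ⟩ := eventually_atTop.mp hB
  constructor
  · refine infinite_of_frequently_inter_Ioc_nonempty ha (frequently_atTop.mpr fun N => ?_)
    obtain ⟨m, hmB, hm⟩ := hJ (2 * (N + J)) (by omega)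
    exact ⟨2 * (N + J), by omega, m,
      ⟨(mem_evenBlocks_iff ha hm).mpr (even_two_mul _), hmB⟩, hm⟩
  · refine infinite_of_frequently_inter_Ioc_nonempty ha (frequently_atTop.mpr fun N => ?_)
    obtain ⟨m, hmB, hm⟩ := hJ (2 * (N + J) + 1) (by omega)
    exact ⟨2 * (N + J) + 1, by omega, m,
      ⟨hmB, fun h => Nat.not_even_two_mul_add_one _ ((mem_evenBlocks_iff ha hm).mp h)⟩, hm⟩

end blocks

lemma exists_splits_of_forall_domLT {R : Set (Set ℕ)} {g : ℕ → ℕ} (hR : ∀ B ∈ R, B.Infinite)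
    (hg : ∀ B ∈ R, DomLT (nextAbove B) g) : ∃ A : Set ℕ, A.Infinite ∧ ∀ B ∈ R, Splits A B :=
  have ha := strictMono_blockSeq g
  ⟨evenBlocks (blockSeq g), evenBlocks_infinite ha, fun B hB => evenBlocks_splits ha <|
    eventually_inter_Ioc_nonempty_of_domLT (hR B hB) (hg B hB) ha.tendsto_atTop
      (le_blockSeq_succ g)⟩

lemma bNumber_le_mk_of_not_exists_splits {R : Set (Set ℕ)} (hR : ∀ B ∈ R, B.Infinite)
    (hreap : ¬ ∃ A : Set ℕ, A.Infinite ∧ ∀ B ∈ R, Splits A B) : bNumber ≤ #R := by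
  have hunbdd : ∀ g : ℕ → ℕ, ∃ f ∈ nextAbove '' R, ¬ DomLT f g := by
    intro g
    by_contra! h
    exact hreap (exists_splits_of_forall_domLT hR fun B hB => h _ (mem_image_of_mem _ hB))
  calc bNumber ≤ #(nextAbove '' R) := csInf_le' ⟨_, hunbdd, rfl⟩
    _ ≤ #R := mk_image_le

/-- `𝔟 ≤ 𝔯`. -/
theorem bNumber_le_rNumber : bNumber ≤ rNumber := by
  have hne : { c | ∃ R : Set (Set ℕ), (∀ B ∈ R, B.Infinite) ∧
      (¬ ∃ A : Set ℕ, A.Infinite ∧ ∀ B ∈ R, Splits A B) ∧ #R = c }.Nonempty :=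
    ⟨_, {B | B.Infinite}, fun _ => id, fun ⟨A, hA, h⟩ => by simpa using (h A hA).2, rfl⟩
  refine le_csInf hne ?_
  rintro _ ⟨R, hR, hreap, rfl⟩
  exact bNumber_le_mk_of_not_exists_splits hR hreap
end

section
/- 𝔰 ≤ non(M): the splitting number is at most the uniformity of the meager ideal. -/
open Cardinal Set Filter

/-- The splitting number `𝔰`: the least cardinality of a family `S` of infinite subsets
of `ℕ` such that every infinite `B ⊆ ℕ` is split by some member of `S`. -/
noncomputable def sNumber : Cardinal :=
  sInf { c | ∃ S : Set (Set ℕ), (∀ A ∈ S, A.Infinite) ∧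
    (∀ B : Set ℕ, B.Infinite → ∃ A ∈ S, Splits A B) ∧ #S = c }

/-- `non(M)`: the least cardinality of a non-meager subset of `ℝ`. -/
noncomputable def nonMeager : Cardinal :=
  sInf { c | ∃ S : Set ℝ, ¬ IsMeagre S ∧ #S = c }

/-!
Code a real `x` by the set of positions `n` where its `n`-th binary digit `⌊x 2ⁿ⌋ mod 2` is `1`.
For a fixed infinite `B`, the reals whose digit set does not split `B` have eventually constant
digits along `B`; for each threshold and each value of the digit this is a nowhere dense set,
since every interval contains a dyadic interval of length `2⁻ⁿ`, `n ∈ B` large, on which the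
`n`-th digit takes the other value. So the codes of the points of a non-meagre set form a
splitting family.
-/

lemma sNumber_le_mk {S : Set (Set ℕ)} (hS : ∀ B : Set ℕ, B.Infinite → ∃ A ∈ S, Splits A B) :
    sNumber ≤ #S := by
  have hsplit : ∀ B : Set ℕ, B.Infinite → ∃ A ∈ {A ∈ S | A.Infinite}, Splits A B := fun B hB ↦ by
    obtain ⟨A, hAS, hAB⟩ := hS B hB
    exact ⟨A, ⟨hAS, hAB.1.mono inter_subset_left⟩, hAB⟩
  calc sNumber ≤ #{A ∈ S | A.Infinite} := csInf_le' ⟨_, fun A hA ↦ hA.2, hsplit, rfl⟩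
    _ ≤ #S := mk_le_mk_of_subset (sep_subset S _)

lemma isNowhereDense_of_forall_exists_Ioo_disjoint {α : Type*} [TopologicalSpace α]
    [LinearOrder α] [OrderTopology α] [DenselyOrdered α] [Nontrivial α] {s : Set α}
    (h : ∀ a b, a < b → ∃ c d, c < d ∧ Ioo c d ⊆ Ioo a b ∧ Disjoint (Ioo c d) s) :
    IsNowhereDense s := by
  by_contra hs
  obtain ⟨a, b, hab, hU⟩ :=
    isOpen_interior.exists_Ioo_subset (nonempty_iff_ne_empty.2 hs)
  obtain ⟨c, d, hcd, hsub, hdisj⟩ := h a b hab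
  have hcl : Ioo c d ⊆ closure s := (hsub.trans hU).trans interior_subset
  obtain ⟨x, hx⟩ := nonempty_Ioo.2 hcd
  exact (mem_closure_iff.1 (hcl hx) _ isOpen_Ioo hx).not_disjoint hdisj

section FloorRing

variable {K : Type*} [Field K] [LinearOrder K] [IsStrictOrderedRing K] [FloorRing K]

lemma Int.floor_mul_eq_of_mem_Ioo {x p : K} {j : ℤ} (hp : 0 < p)
    (hx : x ∈ Ioo (j / p) ((j + 1) / p)) : ⌊x * p⌋ = j := by
  rw [Int.floor_eq_iff]
  exact ⟨((div_lt_iff₀ hp).1 hx.1).le, (lt_div_iff₀ hp).1 hx.2⟩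

/-- One of `⌈a p⌉` and `⌈a p⌉ + 1` has residue `≠ r`; the room `3` pays for the rounding, the
parity choice and the length of `[j, j + 1]`. -/
lemma exists_mod_two_ne_of_three_le {a b p : K} (hp : 0 < p) (h : 3 ≤ (b - a) * p) (r : ℤ) :
    ∃ j : ℤ, j % 2 ≠ r ∧ a ≤ j / p ∧ (j + 1) / p ≤ b := by
  set k := ⌈a * p⌉
  obtain ⟨j, hj, hkj, hjk⟩ : ∃ j : ℤ, j % 2 ≠ r ∧ k ≤ j ∧ j ≤ k + 1 := by
    by_cases hk : k % 2 = r
    · exact ⟨k + 1, by omega, by omega, le_rfl⟩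
    · exact ⟨k, hk, le_rfl, by omega⟩
  have hkl : a * p ≤ k := Int.le_ceil _
  have hku : (k : K) < a * p + 1 := Int.ceil_lt_add_one _
  have hkj' : (k : K) ≤ j := by exact_mod_cast hkj
  have hjk' : (j : K) ≤ k + 1 := by exact_mod_cast hjk
  exact ⟨j, hj, (le_div_iff₀ hp).2 (by linarith), (div_le_iff₀ hp).2 (by linarith)⟩

end FloorRing

def digitSet (x : ℝ) : Set ℕ := {n | ⌊x * 2 ^ n⌋ % 2 = 1}

def digitsConstOn (B : Set ℕ) (m : ℕ) (r : ℤ) : Set ℝ :=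
  {x | ∀ n ∈ B, m < n → ⌊x * 2 ^ n⌋ % 2 = r}

lemma isNowhereDense_digitsConstOn {B : Set ℕ} (hB : B.Infinite) (m : ℕ) (r : ℤ) :
    IsNowhereDense (digitsConstOn B m r) := by
  refine isNowhereDense_of_forall_exists_Ioo_disjoint fun a b hab ↦ ?_
  have hpow : Tendsto (fun n : ℕ ↦ (b - a) * 2 ^ n) atTop atTop :=
    (tendsto_pow_atTop_atTop_of_one_lt (one_lt_two (α := ℝ))).const_mul_atTop (sub_pos.2 hab)
  obtain ⟨n, hnB, hmn, hn⟩ := (Nat.frequently_atTop_iff_infinite.2 hB).and_eventually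
    ((eventually_gt_atTop m).and (hpow.eventually_ge_atTop 3)) |>.exists
  have hp : (0 : ℝ) < 2 ^ n := by positivity
  obtain ⟨j, hj, haj, hjb⟩ := exists_mod_two_ne_of_three_le hp hn r
  refine ⟨j / 2 ^ n, (j + 1) / 2 ^ n, div_lt_div_of_pos_right (lt_add_one _) hp,
    Ioo_subset_Ioo haj hjb, disjoint_left.2 fun x hx hxs ↦ hj ?_⟩
  rw [← Int.floor_mul_eq_of_mem_Ioo hp hx]
  exact hxs n hnB hmn

lemma exists_digitsConstOn_of_not_splits {x : ℝ} {B : Set ℕ} (h : ¬ Splits (digitSet x) B) :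
    ∃ m, x ∈ digitsConstOn B m 0 ∪ digitsConstOn B m 1 := by
  rw [Splits, not_and_or, not_infinite, not_infinite] at h
  rcases h with h | h
  · obtain ⟨m, hm⟩ := h.bddAbove
    refine ⟨m, Or.inl fun n hnB hmn ↦ ?_⟩
    have hnA : n ∉ digitSet x := fun hnA ↦ (hm ⟨hnA, hnB⟩).not_gt hmn
    simp only [digitSet, mem_ofPred_eq] at hnA
    omega
  · obtain ⟨m, hm⟩ := h.bddAbove
    exact ⟨m, Or.inr fun n hnB hmn ↦ by_contra fun hnA ↦ (hm ⟨hnB, hnA⟩).not_gt hmn⟩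

lemma isMeagre_setOf_not_splits_digitSet {B : Set ℕ} (hB : B.Infinite) :
    IsMeagre {x : ℝ | ¬ Splits (digitSet x) B} :=
  (isMeagre_iUnion fun m ↦ (isNowhereDense_digitsConstOn hB m 0).isMeagre.union
    (isNowhereDense_digitsConstOn hB m 1).isMeagre).mono
    fun _ hx ↦ mem_iUnion.2 (exists_digitsConstOn_of_not_splits hx)

lemma exists_splits_digitSet_of_not_isMeagre {X : Set ℝ} (hX : ¬ IsMeagre X) {B : Set ℕ}
    (hB : B.Infinite) : ∃ A ∈ digitSet '' X, Splits A B := by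
  obtain ⟨x, hxX, hx⟩ := not_subset.1 fun h ↦ hX ((isMeagre_setOf_not_splits_digitSet hB).mono h)
  exact ⟨digitSet x, mem_image_of_mem _ hxX, not_not.1 hx⟩

/-- `𝔰 ≤ non(M)`. -/
theorem sNumber_le_nonMeager : sNumber ≤ nonMeager := by
  refine le_csInf ⟨_, univ, not_isMeagre_of_isOpen isOpen_univ univ_nonempty, rfl⟩ ?_
  rintro _ ⟨X, hX, rfl⟩
  calc sNumber ≤ #(digitSet '' X) :=
        sNumber_le_mk fun _ hB ↦ exists_splits_digitSet_of_not_isMeagre hX hB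
    _ ≤ #X := mk_image_le
end

section
/- cov(M) ≤ 𝔯: the covering number of the meager ideal is at most the reaping number. -/
/-!
Send `x : ℝ` to the set `binaryDigits x` of positions of the digit `1` in its binary expansion.
For an infinite `B ⊆ ℕ`, the reals whose digit set does not split `B` are those whose digits
are eventually constant along `B`; this is a meagre set, since any open set contains a dyadic
interval on which a prescribed digit at a prescribed, arbitrarily late, position of `B` takes
the "wrong" value. Now if `R` is a reaping family, every `x` has some `B ∈ R` not split by
`binaryDigits x`, so these meagre sets, one for each `B ∈ R`, cover `ℝ`.
-/

open Cardinal Set Filter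

/-- `cov(M)`: the least cardinality of a family of meager subsets of `ℝ` whose union
covers `ℝ`. -/
noncomputable def covMeager : Cardinal :=
  sInf { c | ∃ F : Set (Set ℝ), (∀ s ∈ F, IsMeagre s) ∧ ⋃₀ F = Set.univ ∧ #F = c }

lemma isNowhereDense_of_forall_exists_disjoint {X : Type*} [TopologicalSpace X] {s : Set X}
    (h : ∀ U, IsOpen U → U.Nonempty → ∃ V ⊆ U, IsOpen V ∧ V.Nonempty ∧ Disjoint V s) :
    IsNowhereDense s := by
  by_contra hs
  obtain ⟨V, hVU, hVo, hVne, hVs⟩ :=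
    h _ isOpen_interior (nonempty_iff_ne_empty.2 hs)
  exact hVne.ne_empty <|
    (hVs.closure_right hVo).eq_bot_of_le (hVU.trans interior_subset)

/-- `n ∈ binaryDigits x` iff the `n`-th binary digit of `x` after the point is `1`
(for `n = 0`, iff `⌊x⌋` is odd). -/
def binaryDigits (x : ℝ) : Set ℕ := {n | Odd ⌊x * 2 ^ n⌋}

lemma eventually_exists_isOpen_forall_mem_binaryDigits_iff {U : Set ℝ} (hU : IsOpen U)
    (hne : U.Nonempty) (p : Prop) :
    ∀ᶠ n in atTop, ∃ V ⊆ U, IsOpen V ∧ V.Nonempty ∧ ∀ y ∈ V, (n ∈ binaryDigits y ↔ p) := by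
  obtain ⟨x, hx⟩ := hne
  obtain ⟨ε, hε, hball⟩ := Metric.isOpen_iff.1 hU x hx
  filter_upwards
    [(tendsto_pow_atTop_atTop_of_one_lt (one_lt_two (α := ℝ))).eventually_gt_atTop (2 / ε)]
    with n hn
  set t : ℝ := 2 ^ n
  have ht : 0 < t := by positivity
  have htε : 2 < ε * t := by rwa [div_lt_iff₀' hε] at hn
  obtain ⟨k, hk, hkp⟩ : ∃ k : ℤ, (k = ⌊x * t⌋ ∨ k = ⌊x * t⌋ + 1) ∧ (Odd k ↔ p) := by
    by_cases h : Odd ⌊x * t⌋ ↔ p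
    · exact ⟨_, .inl rfl, h⟩
    · refine ⟨_, .inr rfl, ?_⟩
      rw [odd_add_one, ← Int.not_odd_iff_even]
      tauto
  have hfloor := Int.floor_le (x * t)
  have hfloor' := Int.lt_floor_add_one (x * t)
  refine ⟨U ∩ (· * t) ⁻¹' Ioo (k : ℝ) (k + 1), inter_subset_left,
    hU.inter (isOpen_Ioo.preimage (continuous_mul_const t)), ⟨(k + 1 / 2) / t, ?_, ?_⟩, ?_⟩
  · -- `|k + 1/2 - x t| < 3/2 < ε t`
    apply hball
    rw [Metric.mem_ball, Real.dist_eq, abs_sub_lt_iff, div_sub' ht.ne', sub_div' ht.ne',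
      div_lt_iff₀ ht, div_lt_iff₀ ht]
    rcases hk with rfl | rfl <;> push_cast <;> constructor <;> linarith
  · simp only [mem_preimage, div_mul_cancel₀ _ ht.ne', mem_Ioo]
    constructor <;> linarith
  · rintro y ⟨-, hy⟩
    show Odd ⌊y * t⌋ ↔ p
    rwa [Int.floor_eq_iff.2 ⟨hy.1.le, hy.2⟩]

lemma isNowhereDense_setOf_forall_mem_binaryDigits_iff {B : Set ℕ} (hB : B.Infinite)
    (p : Prop) : IsNowhereDense {x : ℝ | ∀ n ∈ B, (n ∈ binaryDigits x ↔ p)} := by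
  refine isNowhereDense_of_forall_exists_disjoint fun U hU hne ↦ ?_
  obtain ⟨n, hnB, V, hVU, hVo, hVne, hV⟩ :=
    ((Nat.frequently_atTop_iff_infinite.2 hB).and_eventually
      (eventually_exists_isOpen_forall_mem_binaryDigits_iff hU hne ¬p)).exists
  refine ⟨V, hVU, hVo, hVne, disjoint_left.2 fun y hyV hy ↦ ?_⟩
  have := (hV y hyV).symm.trans (hy n hnB)
  tauto

lemma exists_forall_mem_iff_of_not_splits {A B : Set ℕ} (h : ¬ Splits A B) :
    ∃ m, ∃ p : Prop, ∀ n ∈ B \ Iio m, (n ∈ A ↔ p) := by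
  rw [Splits, not_and_or, not_infinite, not_infinite] at h
  rcases h with hfin | hfin
  · obtain ⟨m, hm⟩ := hfin.exists_le
    refine ⟨m + 1, False, fun n ⟨hnB, hnm⟩ ↦ iff_false_intro fun hnA ↦ ?_⟩
    exact hnm (Nat.lt_succ_of_le (hm n ⟨hnA, hnB⟩))
  · obtain ⟨m, hm⟩ := hfin.exists_le
    refine ⟨m + 1, True, fun n ⟨hnB, hnm⟩ ↦ iff_true_intro (not_not.1 fun hnA ↦ ?_)⟩
    exact hnm (Nat.lt_succ_of_le (hm n ⟨hnB, hnA⟩))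

lemma isMeagre_setOf_not_splits_binaryDigits {B : Set ℕ} (hB : B.Infinite) :
    IsMeagre {x : ℝ | ¬ Splits (binaryDigits x) B} := by
  have hsub : {x : ℝ | ¬ Splits (binaryDigits x) B} ⊆
      ⋃ (m : ℕ) (p : Prop), {x | ∀ n ∈ B \ Iio m, (n ∈ binaryDigits x ↔ p)} := fun x hx ↦ by
    simpa only [mem_iUnion, mem_ofPred_eq] using exists_forall_mem_iff_of_not_splits hx
  refine .mono hsub (isMeagre_iUnion fun m ↦ isMeagre_iUnion fun p ↦ ?_)
  exact (isNowhereDense_setOf_forall_mem_binaryDigits_iff (hB.sdiff (finite_Iio m)) p).isMeagre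

lemma exists_not_splits {R : Set (Set ℕ)} (hR : ¬ ∃ A : Set ℕ, A.Infinite ∧ ∀ B ∈ R, Splits A B)
    (A : Set ℕ) : ∃ B ∈ R, ¬ Splits A B := by
  by_contra! h
  obtain ⟨B, hB⟩ : R.Nonempty :=
    nonempty_iff_ne_empty.2 fun hR₀ ↦ hR ⟨Set.univ, infinite_univ, by simp [hR₀]⟩
  exact hR ⟨A, (h B hB).1.mono inter_subset_left, h⟩

/-- `cov(M) ≤ 𝔯`. -/
theorem covMeager_le_rNumber : covMeager ≤ rNumber := by
  -- no infinite set splits itself, so the family of all infinite sets is not split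
  refine le_csInf ⟨_, {B | B.Infinite}, fun _ ↦ id,
    fun ⟨A, hA, hsplit⟩ ↦ (hsplit A hA).2 (by simp), rfl⟩ ?_
  rintro _ ⟨R, hRinf, hR, rfl⟩
  set F := (fun B ↦ {x : ℝ | ¬ Splits (binaryDigits x) B}) '' R
  have hmeagre : ∀ s ∈ F, IsMeagre s := by
    rintro _ ⟨B, hB, rfl⟩
    exact isMeagre_setOf_not_splits_binaryDigits (hRinf B hB)
  have hcover : ⋃₀ F = Set.univ := eq_univ_of_forall fun x ↦ by
    obtain ⟨B, hB, hx⟩ := exists_not_splits hR (binaryDigits x)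
    exact ⟨_, mem_image_of_mem _ hB, hx⟩
  calc covMeager ≤ #F := csInf_le' ⟨F, hmeagre, hcover, rfl⟩
    _ ≤ #R := mk_image_le
end
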